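/- arXiv:2507.03551 — 2 statements merged into one kernel-verified Lean document; each statement's English description precedes it below -/
import Mathlib

section
/- Let μ ∈ (0,1], λ > 0, and let f : (0,∞) → (0,∞) be a C^∞ function in the generalized Bernstein class B_μ. Then f^λ belongs to B_{μ(⌊λ⌋+1)}, i.e. the function x ↦ x^{1-μ(⌊λ⌋+1)} (f(x)^λ)' is completely monotonic on (0,∞), where ⌊·⌋ denotes the integer part. -/
open Real Set

/-- `f` is completely monotonic on `(0,∞)`. -/
def CompletelyMonotonicOn (f : ℝ → ℝ) : Prop :=
  ContDiffOn ℝ (⊤ : ℕ∞) f (Set.Ioi 0) ∧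
  ∀ (n : ℕ) (x : ℝ), 0 < x → 0 ≤ (-1 : ℝ) ^ n * iteratedDeriv n f x

open Topology

namespace CMAux

local notation "S" => Set.Ioi (0:ℝ)

lemma smo_deriv {f : ℝ → ℝ} (hf : ContDiffOn ℝ (⊤ : ℕ∞) f S) : ContDiffOn ℝ (⊤ : ℕ∞) (deriv f) S :=
  hf.deriv_of_isOpen isOpen_Ioi (by simp)

lemma diffAt {f : ℝ → ℝ} (hf : ContDiffOn ℝ (⊤ : ℕ∞) f S) {x : ℝ} (hx : 0 < x) :
    DifferentiableAt ℝ f x :=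
  (hf.differentiableOn (by simp)).differentiableAt (isOpen_Ioi.mem_nhds hx)

lemma itd_smo {f : ℝ → ℝ} (hf : ContDiffOn ℝ (⊤ : ℕ∞) f S) (n : ℕ) :
    ContDiffOn ℝ (⊤ : ℕ∞) (iteratedDeriv n f) S := by
  induction n with
  | zero => simpa [iteratedDeriv_zero] using hf
  | succ n ih => rw [iteratedDeriv_succ]; exact smo_deriv ih

lemma itd_congr {f g : ℝ → ℝ} (h : Set.EqOn f g S) (n : ℕ) {x : ℝ} (hx : 0 < x) :
    iteratedDeriv n f x = iteratedDeriv n g x :=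
  h.iteratedDeriv_of_isOpen isOpen_Ioi n hx

lemma eqOn_deriv {f g : ℝ → ℝ} (h : Set.EqOn f g S) :
    Set.EqOn (deriv f) (deriv g) S := fun x hx => by
  apply Filter.EventuallyEq.deriv_eq
  filter_upwards [isOpen_Ioi.mem_nhds hx] with a ha using h ha

lemma itd_within {f : ℝ → ℝ} (n : ℕ) {x : ℝ} (hx : x ∈ S) :
    iteratedDerivWithin n f S x = iteratedDeriv n f x := by
  rw [iteratedDerivWithin_eq_iteratedFDerivWithin, iteratedDeriv_eq_iteratedFDeriv,
    iteratedFDerivWithin_of_isOpen n isOpen_Ioi hx]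

lemma itd_add {f g : ℝ → ℝ} (hf : ContDiffOn ℝ (⊤ : ℕ∞) f S) (hg : ContDiffOn ℝ (⊤ : ℕ∞) g S)
    (n : ℕ) {x : ℝ} (hx : 0 < x) :
    iteratedDeriv n (fun y => f y + g y) x = iteratedDeriv n f x + iteratedDeriv n g x := by
  have hx' : x ∈ S := hx
  rw [← itd_within (f := fun y => f y + g y) n hx', ← itd_within (f := f) n hx',
    ← itd_within (f := g) n hx']
  exact iteratedDerivWithin_add hx' (isOpen_Ioi.uniqueDiffOn)
    (hf.of_le (by exact_mod_cast le_top) x hx') (hg.of_le (by exact_mod_cast le_top) x hx')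

lemma itd_cmul {f : ℝ → ℝ} (hf : ContDiffOn ℝ (⊤ : ℕ∞) f S) (c : ℝ) (n : ℕ) {x : ℝ} (hx : 0 < x) :
    iteratedDeriv n (fun y => c * f y) x = c * iteratedDeriv n f x := by
  have hx' : x ∈ S := hx
  rw [← itd_within (f := fun y => c * f y) n hx', ← itd_within (f := f) n hx']
  exact iteratedDerivWithin_const_mul hx' (isOpen_Ioi.uniqueDiffOn) c (hf.of_le (by exact_mod_cast le_top) x hx')

end CMAux

namespace CMAux2
open CMAux

local notation "S" => Set.Ioi (0:ℝ)

lemma mulSign : ∀ (k : ℕ) (u v : ℝ → ℝ), ContDiffOn ℝ (⊤ : ℕ∞) u S → ContDiffOn ℝ (⊤ : ℕ∞) v S →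
    (∀ j ≤ k, ∀ x : ℝ, 0 < x → 0 ≤ (-1:ℝ)^j * iteratedDeriv j u x) →
    (∀ j ≤ k, ∀ x : ℝ, 0 < x → 0 ≤ (-1:ℝ)^j * iteratedDeriv j v x) →
    ∀ x : ℝ, 0 < x → 0 ≤ (-1:ℝ)^k * iteratedDeriv k (fun y => u y * v y) x := by
  intro k
  induction k with
  | zero =>
    intro u v hu hv hsu hsv x hx
    simpa [iteratedDeriv_zero] using
      mul_nonneg (by simpa using hsu 0 le_rfl x hx) (by simpa using hsv 0 le_rfl x hx)
  | succ k ih =>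
    intro u v hu hv hsu hsv x hx
    set A : ℝ → ℝ := fun y => (-deriv u y) * v y with hA
    set B : ℝ → ℝ := fun y => u y * (-deriv v y) with hB
    have hAs : ContDiffOn ℝ (⊤ : ℕ∞) A S := ((smo_deriv hu).neg).mul hv
    have hBs : ContDiffOn ℝ (⊤ : ℕ∞) B S := hu.mul ((smo_deriv hv).neg)
    have heq : Set.EqOn (deriv (fun y => u y * v y)) (fun y => -(A y + B y)) S := by
      intro y hy
      rw [deriv_fun_mul (diffAt hu hy) (diffAt hv hy)]
      simp [hA, hB]; ring
    have hstep : iteratedDeriv (k+1) (fun y => u y * v y) x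
        = -(iteratedDeriv k A x + iteratedDeriv k B x) := by
      rw [iteratedDeriv_succ', itd_congr heq k hx]
      rw [show (fun y => -(A y + B y)) = (fun y => -((fun z => A z + B z) y)) from rfl,
        iteratedDeriv_fun_neg, itd_add hAs hBs k hx]
    have hsu' : ∀ j ≤ k, ∀ x : ℝ, 0 < x → 0 ≤ (-1:ℝ)^j * iteratedDeriv j (fun y => -deriv u y) x := by
      intro j hj y hy
      have : iteratedDeriv j (fun y => -deriv u y) y = -iteratedDeriv (j+1) u y := by
        rw [show (fun y => -deriv u y) = (fun y => -((deriv u) y)) from rfl, iteratedDeriv_fun_neg,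
          ← iteratedDeriv_succ']
      rw [this]
      have := hsu (j+1) (by omega) y hy
      rw [pow_succ] at this; nlinarith [this]
    have hsv' : ∀ j ≤ k, ∀ x : ℝ, 0 < x → 0 ≤ (-1:ℝ)^j * iteratedDeriv j (fun y => -deriv v y) x := by
      intro j hj y hy
      have : iteratedDeriv j (fun y => -deriv v y) y = -iteratedDeriv (j+1) v y := by
        rw [show (fun y => -deriv v y) = (fun y => -((deriv v) y)) from rfl, iteratedDeriv_fun_neg,
          ← iteratedDeriv_succ']
      rw [this]
      have := hsv (j+1) (by omega) y hy
      rw [pow_succ] at this; nlinarith [this]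
    have hAsign := ih (fun y => -deriv u y) v ((smo_deriv hu).neg) hv hsu'
      (fun j hj => hsv j (by omega)) x hx
    have hBsign := ih u (fun y => -deriv v y) hu ((smo_deriv hv).neg)
      (fun j hj => hsu j (by omega)) hsv' x hx
    rw [hstep, pow_succ]
    nlinarith [hAsign, hBsign]

end CMAux2

namespace CMAux3
open CMAux CMAux2

local notation "S" => Set.Ioi (0:ℝ)

def CM (f : ℝ → ℝ) : Prop :=
  ContDiffOn ℝ (⊤ : ℕ∞) f (Set.Ioi 0) ∧
  ∀ (n : ℕ) (x : ℝ), 0 < x → 0 ≤ (-1 : ℝ) ^ n * iteratedDeriv n f x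

lemma cm_mul {u v : ℝ → ℝ} (hu : CM u) (hv : CM v) : CM (fun y => u y * v y) :=
  ⟨hu.1.mul hv.1, fun n x hx =>
    mulSign n u v hu.1 hv.1 (fun j _ => hu.2 j) (fun j _ => hv.2 j) x hx⟩

lemma itd_zero_fun (n : ℕ) : iteratedDeriv n (fun _ : ℝ => (0:ℝ)) = fun _ => 0 := by
  induction n with
  | zero => simp [iteratedDeriv_zero]
  | succ n ih => rw [iteratedDeriv_succ, ih]; simp

lemma cm_const {c : ℝ} (hc : 0 ≤ c) : CM (fun _ => c) := by
  refine ⟨contDiffOn_const, fun n x hx => ?_⟩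
  cases n with
  | zero => simpa using hc
  | succ n =>
    rw [iteratedDeriv_succ', deriv_const', itd_zero_fun]
    simp

lemma cm_cmul {c : ℝ} {u : ℝ → ℝ} (hc : 0 ≤ c) (hu : CM u) : CM (fun y => c * u y) := by
  refine ⟨hu.1.const_smul c, fun n x hx => ?_⟩
  rw [itd_cmul hu.1 c n hx]
  have := hu.2 n x hx
  nlinarith [this]

lemma smo_rpow (a : ℝ) : ContDiffOn ℝ (⊤ : ℕ∞) (fun y : ℝ => y ^ a) S := fun x hx =>
  (contDiffAt_rpow_const_of_ne (ne_of_gt hx)).contDiffWithinAt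

lemma cm_rpow {a : ℝ} (ha : a ≤ 0) : CM (fun y : ℝ => y ^ a) := by
  refine ⟨smo_rpow a, ?_⟩
  have key : ∀ (n : ℕ) (a : ℝ), a ≤ 0 → ∀ x : ℝ, 0 < x →
      0 ≤ (-1:ℝ)^n * iteratedDeriv n (fun y : ℝ => y ^ a) x := by
    intro n
    induction n with
    | zero => intro a ha x hx; simpa using Real.rpow_nonneg hx.le a
    | succ n ih =>
      intro a ha x hx
      have heq : Set.EqOn (deriv (fun y : ℝ => y ^ a)) (fun y : ℝ => a * y ^ (a-1)) S := by
        intro y hy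
        rw [Real.deriv_rpow_const]
      rw [iteratedDeriv_succ', itd_congr heq n hx, itd_cmul (smo_rpow (a-1)) a n hx]
      have := ih (a-1) (by linarith) x hx
      rw [pow_succ]
      nlinarith [this]
  intro n x hx; exact key n a ha x hx

lemma cm_npow {u : ℝ → ℝ} (hu : CM u) (m : ℕ) : CM (fun y => u y ^ m) := by
  induction m with
  | zero => simpa using cm_const zero_le_one
  | succ m ih =>
    have := cm_mul ih hu
    simpa [pow_succ] using this

end CMAux3

namespace CMAux4
open CMAux CMAux2 CMAux3

local notation "S" => Set.Ioi (0:ℝ)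

lemma cm_core {μ : ℝ} {f : ℝ → ℝ} (hμ0 : 0 < μ)
    (hfsmooth : ContDiffOn ℝ (⊤ : ℕ∞) f S) (hfpos : ∀ x : ℝ, 0 < x → 0 < f x)
    (hg : CM (fun x => x ^ (1-μ) * deriv f x)) :
    CM (fun x => x ^ (-μ) * f x) := by
  set h : ℝ → ℝ := fun x => x ^ (-μ) * f x with hh
  set g : ℝ → ℝ := fun x => x ^ (1-μ) * deriv f x with hgdef
  have hs : ContDiffOn ℝ (⊤ : ℕ∞) h S := (smo_rpow (-μ)).mul hfsmooth
  -- the fundamental differential relation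
  have R : ∀ n : ℕ, Set.EqOn
      (fun x => x * iteratedDeriv (n+1) h x + ((n:ℝ)+μ) * iteratedDeriv n h x)
      (iteratedDeriv n g) S := by
    intro n
    induction n with
    | zero =>
      intro x hx
      have hx0 : (0:ℝ) < x := hx
      have hdh : deriv h x = (-μ) * x ^ (-μ-1) * f x + x ^ (-μ) * deriv f x := by
        rw [hh]
        rw [deriv_fun_mul (diffAt (smo_rpow (-μ)) hx0) (diffAt hfsmooth hx0),
          Real.deriv_rpow_const]
      have hx1 : x ^ (-μ-1) * x = x ^ (-μ) := by
        have h' := Real.rpow_add_one hx0.ne' (-μ-1)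
        have h'' : (-μ-1)+1 = -μ := by ring
        rw [h''] at h'
        linarith
      have hx2 : x ^ (-μ) * x = x ^ (1-μ) := by
        have h' := Real.rpow_add_one hx0.ne' (-μ)
        have h'' : (-μ)+1 = 1-μ := by ring
        rw [h''] at h'
        linarith
      simp only [zero_add, iteratedDeriv_one, iteratedDeriv_zero, Nat.cast_zero, hgdef]
      rw [hdh, hh]
      linear_combination (-μ * f x) * hx1 + deriv f x * hx2
    | succ n ih =>
      intro x hx
      have hx0 : (0:ℝ) < x := hx
      have hD := eqOn_deriv ih hx
      have d1 : DifferentiableAt ℝ (fun y => y * iteratedDeriv (n+1) h y) x :=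
        differentiableAt_fun_id.mul (diffAt (itd_smo hs (n+1)) hx0)
      have d2 : DifferentiableAt ℝ (fun y => ((n:ℝ)+μ) * iteratedDeriv n h y) x :=
        (diffAt (itd_smo hs n) hx0).const_mul _
      have e1 : deriv (fun y => y * iteratedDeriv (n+1) h y + ((n:ℝ)+μ) * iteratedDeriv n h y) x
          = iteratedDeriv (n+1) h x + x * iteratedDeriv (n+2) h x
            + ((n:ℝ)+μ) * iteratedDeriv (n+1) h x := by
        rw [deriv_fun_add d1 d2, deriv_fun_mul differentiableAt_fun_id (diffAt (itd_smo hs (n+1)) hx0),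
          deriv_const_mul _ (diffAt (itd_smo hs n) hx0), deriv_id'', ← iteratedDeriv_succ,
          ← iteratedDeriv_succ]
        ring
      rw [e1, ← iteratedDeriv_succ (f := g)] at hD
      show x * iteratedDeriv (n+1+1) h x + (((n+1:ℕ):ℝ)+μ) * iteratedDeriv (n+1) h x
        = iteratedDeriv (n+1) g x
      push_cast
      linarith [hD]
  -- the main sign statement
  have main : ∀ n : ℕ, ∀ x : ℝ, 0 < x → 0 ≤ (-1:ℝ)^n * iteratedDeriv n h x := by
    intro n
    induction n with
    | zero =>
      intro x hx
      simp only [iteratedDeriv_zero, pow_zero, one_mul, hh]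
      exact mul_nonneg (Real.rpow_nonneg hx.le _) (hfpos x hx).le
    | succ n ih =>
      by_contra hcon
      push_neg at hcon
      obtain ⟨x₀, hx₀, hneg⟩ := hcon
      set c : ℝ := (n:ℝ) + 1 + μ with hc
      have hc1 : 0 < c - 1 := by
        have : (0:ℝ) ≤ (n:ℝ) := Nat.cast_nonneg n
        rw [hc]; linarith
      set ψ : ℝ → ℝ := fun y => (-1:ℝ)^(n+1) * (y ^ c * iteratedDeriv (n+1) h y) with hψ
      have hψs : ContDiffOn ℝ (⊤ : ℕ∞) ψ S :=
        contDiffOn_const.mul ((smo_rpow c).mul (itd_smo hs (n+1)))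
      have hψmono : MonotoneOn ψ S := by
        apply monotoneOn_of_deriv_nonneg (convex_Ioi 0) hψs.continuousOn
        · rw [interior_Ioi]
          exact fun x hx => (diffAt hψs hx).differentiableWithinAt
        · rw [interior_Ioi]
          intro x hx
          have hx0 : (0:ℝ) < x := hx
          have dψ : deriv ψ x = (-1:ℝ)^(n+1) *
              (c * x ^ (c-1) * iteratedDeriv (n+1) h x + x ^ c * iteratedDeriv (n+2) h x) := by
            rw [hψ]
            rw [deriv_const_mul (d := fun y => y ^ c * iteratedDeriv (n+1) h y) _ ((diffAt (smo_rpow c) hx0).mul (diffAt (itd_smo hs (n+1)) hx0)),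
              deriv_fun_mul (diffAt (smo_rpow c) hx0) (diffAt (itd_smo hs (n+1)) hx0),
              Real.deriv_rpow_const, ← iteratedDeriv_succ]
          have hxc : x ^ c = x ^ (c-1) * x := by
            have h' := Real.rpow_add_one hx0.ne' (c-1)
            have h'' : (c-1)+1 = c := by ring
            rw [h''] at h'
            linarith
          have hx' : x * iteratedDeriv (n+2) h x + c * iteratedDeriv (n+1) h x
              = iteratedDeriv (n+1) g x := by
            have hr := R (n+1) hx
            push_cast at hr
            rw [hc]
            exact hr
          have dψ2 : deriv ψ x = x ^ (c-1) * ((-1:ℝ)^(n+1) * iteratedDeriv (n+1) g x) := by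
            rw [dψ]
            linear_combination ((-1:ℝ)^(n+1) * iteratedDeriv (n+2) h x) * hxc
              + ((-1:ℝ)^(n+1) * x ^ (c-1)) * hx'
          rw [dψ2]
          exact mul_nonneg (Real.rpow_nonneg hx0.le _) (hg.2 (n+1) x hx0)
      -- ψ x₀ < 0
      set c0 : ℝ := -(ψ x₀) with hc0def
      have hψx₀ : ψ x₀ < 0 := by
        have hp : (0:ℝ) < x₀ ^ c := Real.rpow_pos_of_pos hx₀ c
        rw [hψ]
        simp only []
        nlinarith [hneg, hp]
      have hc0 : 0 < c0 := by simp [hc0def]; linarith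
      -- lower bound on (-1)^n * (n+1)-th derivative for small a
      have bound : ∀ a : ℝ, 0 < a → a ≤ x₀ →
          c0 * a ^ (-c) ≤ (-1:ℝ)^n * iteratedDeriv (n+1) h a := by
        intro a ha hax
        have hψa : ψ a ≤ ψ x₀ := hψmono ha hx₀ hax
        have h1 : (-1:ℝ)^(n+1) * (a ^ c * iteratedDeriv (n+1) h a) ≤ -c0 := by
          rw [hψ] at hψa; simpa [hc0def] using hψa
        have h2 : (0:ℝ) < a ^ c := Real.rpow_pos_of_pos ha c
        have h3 : a ^ (-c) * a ^ c = 1 := by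
          rw [← Real.rpow_add ha]; simp
        have h4 : (0:ℝ) < a ^ (-c) := Real.rpow_pos_of_pos ha (-c)
        have h5 : a ^ (-c) * ((-1:ℝ)^(n+1) * (a ^ c * iteratedDeriv (n+1) h a))
            ≤ a ^ (-c) * (-c0) := by
          exact mul_le_mul_of_nonneg_left h1 h4.le
        have h6 : a ^ (-c) * ((-1:ℝ)^(n+1) * (a ^ c * iteratedDeriv (n+1) h a))
            = -((-1:ℝ)^n * iteratedDeriv (n+1) h a) := by
          rw [pow_succ]
          linear_combination (-((-1:ℝ)^n * iteratedDeriv (n+1) h a)) * h3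
        rw [h6] at h5
        nlinarith [h5]
      -- the comparison function
      set χ : ℝ → ℝ := fun a => (-1:ℝ)^n * iteratedDeriv n h a + (c0/(c-1)) * a ^ (-(c-1))
        with hχ
      have hχs : ContDiffOn ℝ (⊤ : ℕ∞) χ S :=
        (contDiffOn_const.mul (itd_smo hs n)).add (contDiffOn_const.mul (smo_rpow (-(c-1))))
      have hχmono : MonotoneOn χ (Set.Ioc 0 x₀) := by
        apply monotoneOn_of_deriv_nonneg (convex_Ioc 0 x₀)
          (hχs.continuousOn.mono (fun y hy => hy.1))
        · rw [interior_Ioc]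
          exact fun x hx => (diffAt hχs hx.1).differentiableWithinAt
        · rw [interior_Ioc]
          intro a ha
          have ha0 : (0:ℝ) < a := ha.1
          have dχ : deriv χ a = (-1:ℝ)^n * iteratedDeriv (n+1) h a
              + (c0/(c-1)) * (-(c-1)) * a ^ (-(c-1)-1) := by
            rw [hχ]
            rw [deriv_fun_add ((diffAt (itd_smo hs n) ha0).const_mul _)
                ((diffAt (smo_rpow (-(c-1))) ha0).const_mul _),
              deriv_const_mul _ (diffAt (itd_smo hs n) ha0),
              deriv_const_mul _ (diffAt (smo_rpow (-(c-1))) ha0),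
              Real.deriv_rpow_const, ← iteratedDeriv_succ]
            ring
          have hexp : a ^ (-(c-1)-1) = a ^ (-c) := by
            congr 1; ring
          have h7 : (c0/(c-1)) * (-(c-1)) = -c0 := by
            field_simp
          rw [dχ, hexp, h7]
          have := bound a ha0 ha.2.le
          nlinarith [this]
      -- choose a small point where χ forces negativity
      set K : ℝ := max (χ x₀) 0 + 1 with hK
      have hKpos : 0 < K := by positivity
      set M : ℝ := ((c-1)/c0) * K with hM
      have hMpos : 0 < M := by positivity
      set b : ℝ := M ^ (-(1/(c-1))) with hb
      have hbpos : 0 < b := Real.rpow_pos_of_pos hMpos _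
      set a : ℝ := min x₀ (b/2) with ha
      have ha0 : 0 < a := lt_min hx₀ (by linarith)
      have hax₀ : a ≤ x₀ := min_le_left _ _
      have hab : a < b := lt_of_le_of_lt (min_le_right _ _) (by linarith)
      have hbM : b ^ (-(c-1)) = M := by
        rw [hb, ← Real.rpow_mul hMpos.le]
        rw [show (-(1/(c-1))) * (-(c-1)) = 1 by field_simp, Real.rpow_one]
      have haM : M < a ^ (-(c-1)) := by
        have := Real.rpow_lt_rpow_of_neg ha0 hab (by linarith : -(c-1) < 0)
        rw [hbM] at this
        exact this
      have hχa : χ a ≤ χ x₀ := hχmono ⟨ha0, hax₀⟩ ⟨hx₀, le_refl _⟩ hax₀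
      have hcontr : (-1:ℝ)^n * iteratedDeriv n h a < 0 := by
        have h8 : (c0/(c-1)) * a ^ (-(c-1)) > (c0/(c-1)) * M := by
          apply mul_lt_mul_of_pos_left haM
          positivity
        have h9 : (c0/(c-1)) * M = K := by
          rw [hM]; field_simp
        have h10 : χ x₀ < K := by
          rw [hK]
          have := le_max_left (χ x₀) 0
          linarith
        have e1 : χ a = (-1:ℝ)^n * iteratedDeriv n h a + (c0/(c-1)) * a ^ (-(c-1)) := by
          rw [hχ]
        have e2 : χ x₀ < K := h10
        have : (-1:ℝ)^n * iteratedDeriv n h a + K < χ a := by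
          rw [e1]
          have : K < (c0/(c-1)) * a ^ (-(c-1)) := by rw [← h9]; exact h8
          linarith
        linarith
      exact absurd (ih a ha0) (not_le.mpr hcontr)
  exact ⟨hs, main⟩

end CMAux4

namespace CMAux5
open CMAux CMAux2 CMAux3 CMAux4

local notation "S" => Set.Ioi (0:ℝ)

lemma cm_congr {u v : ℝ → ℝ} (hu : CM u) (huv : Set.EqOn v u S) : CM v := by
  refine ⟨hu.1.congr huv, fun n x hx => ?_⟩
  rw [itd_congr huv n hx]
  exact hu.2 n x hx

variable {μ : ℝ} {f : ℝ → ℝ}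

lemma cm_deriv_f (hμ1 : μ ≤ 1)
    (hg : CM (fun x => x ^ (1-μ) * deriv f x)) : CM (deriv f) := by
  apply cm_congr (cm_mul (cm_rpow (by linarith : μ - 1 ≤ 0)) hg)
  intro x hx
  have hx0 : (0:ℝ) < x := hx
  have : x ^ (μ-1) * x ^ (1-μ) = 1 := by
    rw [← Real.rpow_add hx0]
    norm_num
  simp only []
  calc deriv f x = (x ^ (μ-1) * x ^ (1-μ)) * deriv f x := by rw [this]; ring
    _ = x ^ (μ-1) * (x ^ (1-μ) * deriv f x) := by ring

lemma powSign (hfsmooth : ContDiffOn ℝ (⊤ : ℕ∞) f S) (hfpos : ∀ x : ℝ, 0 < x → 0 < f x)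
    (hdf : CM (deriv f)) :
    ∀ (n : ℕ) (α : ℝ), α ≤ 0 → ∀ x : ℝ, 0 < x →
      0 ≤ (-1:ℝ)^n * iteratedDeriv n (fun y => f y ^ α) x := by
  have hfsm : ∀ α : ℝ, ContDiffOn ℝ (⊤ : ℕ∞) (fun y => f y ^ α) S := fun α =>
    hfsmooth.rpow_const_of_ne (fun x hx => (hfpos x hx).ne')
  intro n
  induction n using Nat.strong_induction_on with
  | _ n IH =>
    match n with
    | 0 =>
      intro α hα x hx
      simpa using Real.rpow_nonneg (hfpos x hx).le α
    | (n+1) =>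
      intro α hα x hx
      have heq : Set.EqOn (deriv (fun y => f y ^ α))
          (fun y => α * (f y ^ (α-1) * deriv f y)) S := by
        intro y hy
        rw [deriv_rpow_const (diffAt hfsmooth hy) (Or.inl (hfpos y hy).ne')]
        ring
      rw [iteratedDeriv_succ', itd_congr heq n hx,
        itd_cmul ((hfsm (α-1)).mul hdf.1) α n hx]
      have hsu : ∀ j ≤ n, ∀ y : ℝ, 0 < y →
          0 ≤ (-1:ℝ)^j * iteratedDeriv j (fun y => f y ^ (α-1)) y := by
        intro j hj y hy
        exact IH j (by omega) (α-1) (by linarith) y hy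
      have := mulSign n (fun y => f y ^ (α-1)) (deriv f) (hfsm (α-1)) hdf.1
        hsu (fun j _ => hdf.2 j) x hx
      rw [pow_succ]
      nlinarith [this]

end CMAux5

open CMAux CMAux2 CMAux3 CMAux4 CMAux5

theorem rpow_of_genBernstein (μ lam : ℝ) (hμ0 : 0 < μ) (hμ1 : μ ≤ 1) (hlam : 0 < lam)
    (f : ℝ → ℝ)
    (hfsmooth : ContDiffOn ℝ (⊤ : ℕ∞) f (Set.Ioi 0)) (hfpos : ∀ x : ℝ, 0 < x → 0 < f x)
    (hf : CompletelyMonotonicOn (fun x => x ^ (1 - μ) * deriv f x)) :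
    CompletelyMonotonicOn
      (fun x => x ^ (1 - μ * ((⌊lam⌋ : ℝ) + 1)) * deriv (fun y => f y ^ lam) x) := by
  have hA : CM (fun x => x ^ (1 - μ) * deriv f x) := hf
  have hm0 : (0:ℤ) ≤ ⌊lam⌋ := Int.floor_nonneg.mpr hlam.le
  set m : ℕ := (⌊lam⌋).toNat with hmdef
  have hmR : ((⌊lam⌋ : ℤ) : ℝ) = (m : ℝ) := by
    rw [hmdef]
    exact_mod_cast (Int.toNat_of_nonneg hm0).symm
  have hfloor_le : ((⌊lam⌋ : ℤ) : ℝ) ≤ lam := Int.floor_le lam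
  have hlt : lam < ((⌊lam⌋ : ℤ) : ℝ) + 1 := Int.lt_floor_add_one lam
  have hρ : lam - 1 - (m:ℝ) ≤ 0 := by rw [← hmR]; linarith
  have hdf : CM (deriv f) := cm_deriv_f hμ1 hA
  have hfsmα : ContDiffOn ℝ (⊤ : ℕ∞) (fun y => f y ^ (lam - 1 - (m:ℝ))) (Set.Ioi 0) :=
    hfsmooth.rpow_const_of_ne (fun x hx => (hfpos x hx).ne')
  have hB : CM (fun x => f x ^ (lam - 1 - (m:ℝ))) :=
    ⟨hfsmα, fun n x hx => powSign hfsmooth hfpos hdf n _ hρ x hx⟩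
  have hD : CM (fun x => x ^ (-μ) * f x) := cm_core hμ0 hfsmooth hfpos hA
  have hDm : CM (fun x => (x ^ (-μ) * f x) ^ m) := cm_npow hD m
  have hT' : CM (fun x => lam * ((x ^ (1-μ) * deriv f x) *
      (f x ^ (lam - 1 - (m:ℝ)) * (x ^ (-μ) * f x) ^ m))) :=
    cm_cmul hlam.le (cm_mul hA (cm_mul hB hDm))
  have hEq : Set.EqOn
      (fun x => x ^ (1 - μ * ((⌊lam⌋ : ℝ) + 1)) * deriv (fun y => f y ^ lam) x)
      (fun x => lam * ((x ^ (1-μ) * deriv f x) *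
        (f x ^ (lam - 1 - (m:ℝ)) * (x ^ (-μ) * f x) ^ m))) (Set.Ioi 0) := by
    intro x hx
    have hx0 : (0:ℝ) < x := hx
    have hfx : 0 < f x := hfpos x hx0
    simp only []
    rw [deriv_rpow_const (diffAt hfsmooth hx0) (Or.inl hfx.ne')]
    have e1 : ((x:ℝ) ^ (-μ) * f x) ^ m = x ^ (-μ * (m:ℝ)) * f x ^ ((m:ℕ):ℝ) := by
      rw [mul_pow, ← Real.rpow_natCast (x ^ (-μ)) m, ← Real.rpow_mul hx0.le,
        ← Real.rpow_natCast (f x) m]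
    have e2 : f x ^ (lam - 1 - (m:ℝ)) * f x ^ ((m:ℕ):ℝ) = f x ^ (lam - 1) := by
      rw [← Real.rpow_add hfx, show lam - 1 - (m:ℝ) + (m:ℝ) = lam - 1 by ring]
    have e3 : x ^ (1 - μ * (((⌊lam⌋:ℤ) : ℝ) + 1)) = x ^ (1-μ) * x ^ (-μ * (m:ℝ)) := by
      rw [show (1:ℝ) - μ * (((⌊lam⌋:ℤ):ℝ) + 1) = (1-μ) + (-μ * (m:ℝ)) from by rw [hmR]; ring,
        Real.rpow_add hx0]
    rw [e3, e1, ← e2]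
    ring
  exact cm_congr hT' hEq
end

section
/- Let 0 < b < a - 1 and define φ_{a,b}(t) = (e^{-bt} - e^{-at})/(1 - e^{-t}) for t > 0. Then φ_{a,b} is decreasing on (0,∞) and log φ_{a,b} is convex on (0,∞). -/
open Real Set

lemma key1 {c t : ℝ} (hc : 1 < c) (ht : 0 < t) :
    c * (Real.exp t - 1) < Real.exp (c * t) - 1 := by
  have h1 : Real.exp (c * t) = Real.exp t * Real.exp ((c - 1) * t) := by
    rw [← Real.exp_add]; ring_nf
  have h2 : (c - 1) * t + 1 < Real.exp ((c - 1) * t) :=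
    Real.add_one_lt_exp (mul_pos (by linarith : (0:ℝ) < c - 1) ht).ne'
  have h3 : Real.exp t - 1 ≤ t * Real.exp t := by
    have h := Real.add_one_le_exp (-t)
    rw [Real.exp_neg] at h
    have h4 := mul_le_mul_of_nonneg_right h (Real.exp_pos t).le
    rw [inv_mul_cancel₀ (Real.exp_ne_zero t)] at h4
    nlinarith
  nlinarith [Real.exp_pos t, Real.exp_pos ((c - 1) * t)]

lemma key_sinh {c : ℝ} (hc : 1 ≤ c) {x : ℝ} (hx : 0 ≤ x) :
    c * Real.sinh x ≤ Real.sinh (c * x) := by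
  have hmono : MonotoneOn (fun y => Real.sinh (c * y) - c * Real.sinh y) (Set.Ici 0) := by
    apply monotoneOn_of_deriv_nonneg (convex_Ici 0)
    · fun_prop
    · intro y hy
      apply DifferentiableAt.differentiableWithinAt
      fun_prop
    · intro y hy
      rw [interior_Ici] at hy
      have hy' : 0 < y := hy
      have hd : HasDerivAt (fun y => Real.sinh (c * y) - c * Real.sinh y)
          (Real.cosh (c * y) * c - c * Real.cosh y) y := by
        have h1 : HasDerivAt (fun y : ℝ => c * y) c y := by
          simpa using (hasDerivAt_id y).const_mul c
        exact ((Real.hasDerivAt_sinh (c * y)).comp y h1).sub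
          ((Real.hasDerivAt_sinh y).const_mul c)
      rw [hd.deriv]
      have hcy : Real.cosh y ≤ Real.cosh (c * y) := by
        rw [Real.cosh_le_cosh, abs_of_pos hy', abs_of_nonneg (by nlinarith)]
        nlinarith
      nlinarith [Real.cosh_pos (x := y)]
  have := hmono (Set.mem_Ici.mpr le_rfl) (Set.mem_Ici.mpr hx) hx
  simpa using this


lemma exp_sub_one_eq {t : ℝ} :
    Real.exp t - 1 = 2 * Real.exp (t/2) * Real.sinh (t/2) := by
  rw [Real.sinh_eq]
  have h1 : Real.exp (t/2) * Real.exp (t/2) = Real.exp t := by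
    rw [← Real.exp_add]; ring_nf
  have h2 : Real.exp (t/2) * Real.exp (-(t/2)) = 1 := by
    rw [← Real.exp_add]; simp
  nlinarith [Real.exp_pos (t/2)]

lemma key2 {c t : ℝ} (hc : 1 ≤ c) (ht : 0 < t)
    (hks : c * Real.sinh (t/2) ≤ Real.sinh (c * (t/2))) :
    c^2 * Real.exp (c*t) * (Real.exp t - 1)^2 ≤ Real.exp t * (Real.exp (c*t) - 1)^2 := by
  have e1 : Real.exp t - 1 = 2 * Real.exp (t/2) * Real.sinh (t/2) := exp_sub_one_eq
  have e2 : Real.exp (c*t) - 1 = 2 * Real.exp (c*t/2) * Real.sinh (c*t/2) := exp_sub_one_eq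
  have et : Real.exp t = Real.exp (t/2) * Real.exp (t/2) := by
    rw [← Real.exp_add]; ring_nf
  have ect : Real.exp (c*t) = Real.exp (c*t/2) * Real.exp (c*t/2) := by
    rw [← Real.exp_add]; ring_nf
  have hS : 0 ≤ Real.sinh (t/2) := by rw [← Real.sinh_zero]; exact Real.sinh_le_sinh.mpr (by linarith)
  have hcs : c * Real.sinh (t/2) ≤ Real.sinh (c*t/2) := by
    have : c * (t/2) = c*t/2 := by ring
    rwa [this] at hks
  have hsq : (c * Real.sinh (t/2))^2 ≤ (Real.sinh (c*t/2))^2 := by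
    apply pow_le_pow_left₀ (by positivity) hcs
  rw [e1, e2, et, ect]
  nlinarith [mul_pos (Real.exp_pos (t/2)) (Real.exp_pos (c*t/2)),
    mul_le_mul_of_nonneg_left hsq
      (show (0:ℝ) ≤ 4 * (Real.exp (t/2) * Real.exp (t/2)) * (Real.exp (c*t/2) * Real.exp (c*t/2)) by positivity)]

lemma one_sub_exp_neg_pos {t : ℝ} (ht : 0 < t) : 0 < 1 - Real.exp (-t) := by
  have : Real.exp (-t) < 1 := Real.exp_lt_one_iff.mpr (by linarith)
  linarith

lemma exp_sub_one_pos {t : ℝ} (ht : 0 < t) : 0 < Real.exp t - 1 := by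
  have := Real.add_one_lt_exp ht.ne'
  linarith

lemma hasDerivAt_log_one_sub_exp {t : ℝ} (ht : 0 < t) :
    HasDerivAt (fun s => Real.log (1 - Real.exp (-s))) (1/(Real.exp t - 1)) t := by
  have hpos := one_sub_exp_neg_pos ht
  have he := exp_sub_one_pos ht
  have hinner : HasDerivAt (fun s : ℝ => 1 - Real.exp (-s)) (Real.exp (-t)) t := by
    have h1 : HasDerivAt (fun s : ℝ => Real.exp (-s)) (-Real.exp (-t)) t := by
      simpa [Function.comp_def] using (Real.hasDerivAt_exp (-t)).comp t (hasDerivAt_neg t)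
    simpa using h1.const_sub 1
  have h := hinner.log hpos.ne'
  convert h using 1
  rw [Real.exp_neg]
  have h0 := Real.exp_ne_zero t
  field_simp

lemma hasDerivAt_inv_exp {t : ℝ} (ht : 0 < t) :
    HasDerivAt (fun s => 1/(Real.exp s - 1)) (-(Real.exp t)/(Real.exp t - 1)^2) t := by
  have he := exp_sub_one_pos ht
  have h := ((Real.hasDerivAt_exp t).sub_const 1).inv he.ne'
  simpa [one_div, Pi.inv_def] using h

lemma hasDerivAt_L {b c t : ℝ} (hc : 0 < c) (ht : 0 < t) :
    HasDerivAt (fun s => -b*s + Real.log (1 - Real.exp (-(c*s))) - Real.log (1 - Real.exp (-s)))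
      (-b + c/(Real.exp (c*t) - 1) - 1/(Real.exp t - 1)) t := by
  have h1 : HasDerivAt (fun s : ℝ => -b*s) (-b) t := by
    simpa using (hasDerivAt_id t).const_mul (-b)
  have hct : HasDerivAt (fun s : ℝ => c*s) c t := by
    simpa using (hasDerivAt_id t).const_mul c
  have h2 : HasDerivAt (fun s => Real.log (1 - Real.exp (-(c*s)))) (c/(Real.exp (c*t)-1)) t := by
    have h := HasDerivAt.comp t (hasDerivAt_log_one_sub_exp (mul_pos hc ht)) hct
    simp only [Function.comp_def] at h
    exact h.congr_deriv (by ring)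
  exact (h1.add h2).sub (hasDerivAt_log_one_sub_exp ht)

lemma hasDerivAt_L1 {b c t : ℝ} (hc : 0 < c) (ht : 0 < t) :
    HasDerivAt (fun s => -b + c/(Real.exp (c*s) - 1) - 1/(Real.exp s - 1))
      (-(c^2 * Real.exp (c*t))/(Real.exp (c*t) - 1)^2 + Real.exp t/(Real.exp t - 1)^2) t := by
  have hct : HasDerivAt (fun s : ℝ => c*s) c t := by
    simpa using (hasDerivAt_id t).const_mul c
  have h2 : HasDerivAt (fun s => c/(Real.exp (c*s) - 1))
      (-(c^2 * Real.exp (c*t))/(Real.exp (c*t)-1)^2) t := by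
    have h := (HasDerivAt.comp t (hasDerivAt_inv_exp (mul_pos hc ht)) hct).const_mul c
    simp only [Function.comp_def, mul_one_div] at h
    exact h.congr_deriv (by ring)
  have h0 : HasDerivAt (fun _ : ℝ => -b) 0 t := hasDerivAt_const t (-b)
  have := (h0.add h2).sub (hasDerivAt_inv_exp ht)
  exact this.congr_deriv (by ring)

/-- `φ_{a,b}(t) = (e^{-bt} - e^{-at})/(1 - e^{-t})`. -/
noncomputable def phi (a b : ℝ) (t : ℝ) : ℝ :=
  (Real.exp (-b * t) - Real.exp (-a * t)) / (1 - Real.exp (-t))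

theorem phi_strictAntiOn_and_log_convexOn (a b : ℝ) (hb : 0 < b) (hba : b < a - 1) :
    StrictAntiOn (phi a b) (Set.Ioi 0) ∧
    ConvexOn ℝ (Set.Ioi 0) (fun t => Real.log (phi a b t)) := by
  set c : ℝ := a - b with hcdef
  have hc1 : 1 < c := by simp only [hcdef]; linarith
  have hc0 : 0 < c := by linarith
  set L : ℝ → ℝ := fun s => -b*s + Real.log (1 - Real.exp (-(c*s))) - Real.log (1 - Real.exp (-s))
    with hLdef
  set L1 : ℝ → ℝ := fun s => -b + c/(Real.exp (c*s) - 1) - 1/(Real.exp s - 1) with hL1def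
  set L2 : ℝ → ℝ := fun s =>
    -(c^2 * Real.exp (c*s))/(Real.exp (c*s) - 1)^2 + Real.exp s/(Real.exp s - 1)^2 with hL2def
  have hdL : ∀ t ∈ Set.Ioi (0:ℝ), HasDerivAt L (L1 t) t := fun t ht => hasDerivAt_L hc0 ht
  have hdL1 : ∀ t ∈ Set.Ioi (0:ℝ), HasDerivAt L1 (L2 t) t := fun t ht => hasDerivAt_L1 hc0 ht
  -- phi = exp ∘ L on Ioi 0
  have hphi : ∀ t ∈ Set.Ioi (0:ℝ), phi a b t = Real.exp (L t) := by
    intro t ht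
    have ht' : (0:ℝ) < t := ht
    have hA : 0 < 1 - Real.exp (-(c*t)) := one_sub_exp_neg_pos (mul_pos hc0 ht')
    have hB : 0 < 1 - Real.exp (-t) := one_sub_exp_neg_pos ht'
    have : Real.exp (L t) = Real.exp (-b*t) * (1 - Real.exp (-(c*t))) / (1 - Real.exp (-t)) := by
      rw [hLdef]
      simp only
      rw [Real.exp_sub, Real.exp_add, Real.exp_log hA, Real.exp_log hB]
    rw [this]
    unfold phi
    have hmul : Real.exp (-b*t) * Real.exp (-(c*t)) = Real.exp (-a*t) := by
      rw [← Real.exp_add]; congr 1; simp only [hcdef]; ring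
    rw [mul_sub, mul_one, hmul]
  -- L1 < 0 on Ioi 0
  have hL1neg : ∀ t ∈ Set.Ioi (0:ℝ), L1 t < 0 := by
    intro t ht
    have ht' : (0:ℝ) < t := ht
    have h1 := exp_sub_one_pos ht'
    have h2 := exp_sub_one_pos (mul_pos hc0 ht')
    have hk := key1 hc1 ht'
    have : c/(Real.exp (c*t) - 1) < 1/(Real.exp t - 1) := by
      rw [div_lt_div_iff₀ h2 h1]
      linarith
    simp only [hL1def]
    linarith
  -- L2 ≥ 0 on Ioi 0
  have hL2nonneg : ∀ t ∈ Set.Ioi (0:ℝ), 0 ≤ L2 t := by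
    intro t ht
    have ht' : (0:ℝ) < t := ht
    have h1 := exp_sub_one_pos ht'
    have h2 := exp_sub_one_pos (mul_pos hc0 ht')
    have hk := key2 hc1.le ht' (key_sinh hc1.le (by linarith : (0:ℝ) ≤ t/2))
    simp only [hL2def]
    rw [← sub_nonneg] at *
    have : c^2 * Real.exp (c*t)/(Real.exp (c*t) - 1)^2 ≤ Real.exp t/(Real.exp t - 1)^2 := by
      rw [div_le_div_iff₀ (by positivity) (by positivity)]
      nlinarith
    have hrw : -(c^2 * Real.exp (c*t))/(Real.exp (c*t) - 1)^2
        = -(c^2 * Real.exp (c*t)/(Real.exp (c*t) - 1)^2) := by ring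
    rw [hrw]
    linarith
  -- continuity of L on Ioi 0
  have hcont : ContinuousOn L (Set.Ioi 0) := fun t ht =>
    (hdL t ht).continuousAt.continuousWithinAt
  -- strict antitonicity of L
  have hanti : StrictAntiOn L (Set.Ioi 0) := by
    apply strictAntiOn_of_deriv_neg (convex_Ioi 0) hcont
    intro x hx
    rw [interior_Ioi] at hx
    rw [(hdL x hx).deriv]
    exact hL1neg x hx
  constructor
  · intro x hx y hy hxy
    rw [hphi x hx, hphi y hy]
    exact Real.exp_lt_exp.mpr (hanti hx hy hxy)
  · have hconvL : ConvexOn ℝ (Set.Ioi 0) L := by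
      apply convexOn_of_hasDerivWithinAt2_nonneg (convex_Ioi 0) hcont (f' := L1) (f'' := L2)
      · intro x hx
        rw [interior_Ioi] at hx ⊢
        exact (hdL x hx).hasDerivWithinAt
      · intro x hx
        rw [interior_Ioi] at hx ⊢
        exact (hdL1 x hx).hasDerivWithinAt
      · intro x hx
        rw [interior_Ioi] at hx
        exact hL2nonneg x hx
    apply hconvL.congr
    intro t ht
    simp only
    rw [hphi t ht, Real.log_exp]
end
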